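/- arXiv:1703.09737 — 2 statements merged into one kernel-verified Lean document; each statement's English description precedes it below -/
import Mathlib

section
/- In the sorted level sequence τ of the sweep map of a (kn,n)-Dyck path, for any level value v = mn, the number of W's with level v+n equals (number of entries with level v) minus (number of S's with level v − kn), whenever this difference is nonnegative. -/
/-!
Every lattice point of a path other than its origin is the end of exactly one step, and a step
ends at level `v` iff it is a `W` starting at `v + n` or an `S` starting at `v - kn`. The points
of the path are the starting points of its steps together with its final point; for a Dyck path
the origin and the final point both lie at level `0`, so the number of steps starting at level `v`
is the number of `W`'s at `v + n` plus the number of `S`'s at `v - kn`. The sweep map only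
permutes the labeled steps, so the same counts hold in its output.
-/

/-- Steps of a path: `true` = north step, `false` = east step.
The level of the lattice point reached after the steps `p`:
each north step adds `k*n`, each east step subtracts `n`. -/
def level (k n : ℕ) (p : List Bool) : ℤ :=
  (k * n : ℤ) * p.count true - (n : ℤ) * p.count false

/-- A `(kn,n)`-Dyck path: `n` north steps, `k*n` east steps, all prefix levels nonnegative. -/
def IsDyck (k n : ℕ) (p : List Bool) : Prop :=
  p.count true = n ∧ p.count false = k * n ∧ ∀ i ≤ p.length, 0 ≤ level k n (p.take i)

/-- The sweep map: label each step by the level of its starting endpoint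
(south endpoint for north steps, west endpoint for east steps), sweep the path
from right to left, and stably sort the labeled steps in nondecreasing order of level.
Entries are pairs `(τᵢ, σᵢ)` with `σᵢ = true` meaning `S` and `σᵢ = false` meaning `W`. -/
def sweep (k n : ℕ) (p : List Bool) : List (ℤ × Bool) :=
  ((List.range p.length).reverse.map fun i => (level k n (p.take i), p.getD i true)).mergeSort
    fun a b => decide (a.1 ≤ b.1)

/-- The S/W word output by the sweep map. -/
def sweepWord (k n : ℕ) (p : List Bool) : List Bool :=
  (sweep k n p).map Prod.snd

def labeledSteps (k n : ℕ) (p : List Bool) : List (ℤ × Bool) :=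
  (List.range p.length).map fun i => (level k n (p.take i), p.getD i true)

lemma level_append_singleton (k n : ℕ) (q : List Bool) (b : Bool) :
    level k n (q ++ [b]) = level k n q + if b then (k * n : ℤ) else -(n : ℤ) := by
  cases b <;> simp [level, List.count_append] <;> ring

lemma level_eq_zero_of_isDyck {k n : ℕ} {p : List Bool} (hp : IsDyck k n p) :
    level k n p = 0 := by
  simp only [level, hp.1, hp.2.1]
  push_cast
  ring

lemma labeledSteps_append_singleton (k n : ℕ) (q : List Bool) (b : Bool) :
    labeledSteps k n (q ++ [b]) = labeledSteps k n q ++ [(level k n q, b)] := by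
  simp only [labeledSteps, List.length_append, List.length_singleton, List.range_succ,
    List.map_append, List.map_singleton, List.take_left, List.getD_eq_getElem?_getD,
    List.getElem?_concat_length, Option.getD_some, List.append_cancel_right_eq]
  refine List.map_congr_left fun i hi => ?_
  rw [List.mem_range] at hi
  rw [List.take_append_of_le_length hi.le, List.getElem?_append_left hi]

lemma sweep_perm_labeledSteps (k n : ℕ) (p : List Bool) :
    (sweep k n p).Perm (labeledSteps k n p) :=
  (List.mergeSort_perm _ _).trans ((List.reverse_perm _).map _)

/-- Counting the lattice points of `p` at level `v` in two ways: as starting points of steps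
plus the final point, and as the origin plus the endpoints of steps. -/
lemma countP_labeledSteps_at_level (k n : ℕ) (v : ℤ) (p : List Bool) :
    (labeledSteps k n p).countP (fun a => a.1 = v) + (if level k n p = v then 1 else 0) =
      (if v = 0 then 1 else 0) +
        (labeledSteps k n p).countP (fun a => a.1 = v + n && !a.2) +
        (labeledSteps k n p).countP (fun a => a.1 = v - k * n && a.2) := by
  induction p using List.reverseRecOn with
  | nil => simp [labeledSteps, level, eq_comm]
  | append_singleton q b ih =>
    simp only [labeledSteps_append_singleton, level_append_singleton, List.countP_append,
      List.countP_singleton]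
    cases b <;> simp only [Bool.not_false, Bool.not_true, Bool.and_true, Bool.and_false,
      if_true, if_false, Bool.false_eq_true, decide_eq_true_eq] <;>
      split_ifs at ih ⊢ <;> omega

theorem IsDyck.countP_sweep_at_level {k n : ℕ} {p : List Bool} (hp : IsDyck k n p) (v : ℤ) :
    (sweep k n p).countP (fun a => a.1 = v) =
      (sweep k n p).countP (fun a => a.1 = v + n && !a.2) +
        (sweep k n p).countP (fun a => a.1 = v - k * n && a.2) := by
  have hcount := countP_labeledSteps_at_level k n v p
  simp only [level_eq_zero_of_isDyck hp, (sweep_perm_labeledSteps k n p).countP_eq] at hcount ⊢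
  split_ifs at hcount <;> omega

theorem stmt8_general (k n : ℕ) (p : List Bool) (hp : IsDyck k n p) (m : ℤ) :
    (sweep k n p).countP (fun a => decide (a.1 = m * n + n) && !a.2) =
      (sweep k n p).countP (fun a => decide (a.1 = m * n)) -
        (sweep k n p).countP (fun a => decide (a.1 = m * n - k * n) && a.2) := by
  rw [hp.countP_sweep_at_level (m * n)]
  omega

/-- Counting rule for the inversion algorithm: in the sweep output of a `(kn,n)`-Dyck path,
for a level value `v = m·n`, the number of `W`'s with level `v + n` equals the number of
entries with level `v` minus the number of `S`'s with level `v - kn`,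
whenever this difference is nonnegative. -/
theorem stmt8 (k n : ℕ) (hn : 0 < n) (p : List Bool) (hp : IsDyck k n p) (m : ℤ)
    (hnonneg : (sweep k n p).countP (fun a => decide (a.1 = m * n - k * n) && a.2) ≤
      (sweep k n p).countP (fun a => decide (a.1 = m * n))) :
    (sweep k n p).countP (fun a => decide (a.1 = m * n + n) && !a.2) =
      (sweep k n p).countP (fun a => decide (a.1 = m * n)) -
        (sweep k n p).countP (fun a => decide (a.1 = m * n - k * n) && a.2) :=
  stmt8_general k n p hp m
end

section
/- The sweep map is injective on (kn,n)-Dyck paths: two (kn,n)-Dyck paths with the same sweep map output word σ are equal. -/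
namespace List

theorem Pairwise.eq_filter_append_filter {α : Type*} {r : α → α → Prop} {l : List α}
    (hl : l.Pairwise r) {p : α → Bool} (hp : ∀ a b, r a b → p b → p a) :
    l = l.filter p ++ l.filter (fun a => !p a) := by
  induction l with
  | nil => rfl
  | cons a t ih =>
    rw [pairwise_cons] at hl
    by_cases ha : p a
    · simp [ha, ← ih hl.2]
    · have hfalse : ∀ b ∈ t, p b = false := fun b hb => by
        simpa using mt (hp a b (hl.1 b hb)) ha
      have h1 : t.filter p = [] := filter_eq_nil_iff.mpr fun b hb => by simp [hfalse b hb]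
      have h2 : t.filter (fun a => !p a) = t :=
        filter_eq_self.mpr fun b hb => by simp [hfalse b hb]
      simp [ha, h1, h2]

section sortedByKey

variable {α β : Type*} [LinearOrder β] {f : α → β} {l : List α}

theorem Pairwise.take_countP_lt (hl : l.Pairwise fun a b => f a ≤ f b) (c : β) :
    l.take (l.countP fun a => f a < c) = l.filter fun a => f a < c := by
  rw [countP_eq_length_filter]
  nth_rw 2 [hl.eq_filter_append_filter (p := fun a => f a < c)
    fun a b hab hb => by simp at hb ⊢; exact hab.trans_lt hb]
  exact take_left

theorem Pairwise.drop_countP_lt (hl : l.Pairwise fun a b => f a ≤ f b) (c : β) :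
    l.drop (l.countP fun a => f a < c) =
      (l.filter fun a => f a = c) ++ l.filter fun a => c < f a := by
  rw [countP_eq_length_filter]
  nth_rw 2 [hl.eq_filter_append_filter (p := fun a => f a < c)
    fun a b hab hb => by simp at hb ⊢; exact hab.trans_lt hb]
  rw [drop_left, (hl.filter _).eq_filter_append_filter (p := fun a => f a ≤ c)
    fun a b hab hb => by simp at hb ⊢; exact hab.trans hb, filter_filter, filter_filter]
  congr 1 <;> refine filter_congr fun a _ => ?_ <;> rw [Bool.eq_iff_iff] <;> simp
  · exact le_antisymm_iff.symm
  · exact le_of_lt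

theorem filter_mergeSort_key_eq (l : List α) (c : β) :
    (l.mergeSort fun a b => decide (f a ≤ f b)).filter (fun a => f a = c) =
      l.filter (fun a => f a = c) := by
  set F := l.filter (fun a => f a = c)
  have hF : ∀ a ∈ F, f a = c := fun a ha => by simpa using of_mem_filter ha
  have hFF : F.filter (fun a => f a = c) = F := filter_eq_self.mpr fun a ha => by simp [hF a ha]
  have hsub : F <+ (l.mergeSort fun a b => decide (f a ≤ f b)).filter (fun a => f a = c) := by
    rw [← hFF]
    refine (sublist_mergeSort (fun a b c hab hbc => ?_) (fun a b => ?_) ?_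
      filter_sublist).filter _
    · simp only [decide_eq_true_eq] at *; exact hab.trans hbc
    · simpa using le_total (f a) (f b)
    · exact pairwise_of_forall_mem_list fun a ha b hb => by simp [hF a ha, hF b hb]
  refine (hsub.eq_of_length ?_).symm
  simp only [F, ← countP_eq_length_filter, (mergeSort_perm _ _).countP_eq]

end sortedByKey

theorem eq_of_count_false_take_eq {l : List Bool} {x y : ℕ}
    (hx : x = l.length ∨ l[x]? = some false) (hy : y = l.length ∨ l[y]? = some false)
    (h : (l.take x).count false = (l.take y).count false) : x = y := by
  have key : ∀ {x y : ℕ}, x < y → (x = l.length ∨ l[x]? = some false) →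
      (y = l.length ∨ l[y]? = some false) →
        (l.take x).count false < (l.take y).count false := by
    intro x y hxy hx hy
    have hyl : y ≤ l.length := by
      rcases hy with rfl | hy
      · rfl
      · exact (getElem?_eq_some_iff.mp hy).1.le
    have hxl : l[x]? = some false := hx.resolve_left (by omega)
    calc (l.take x).count false < (l.take (x + 1)).count false := by
          simp [take_add_one, hxl, count_append]
      _ ≤ (l.take y).count false := ((take_prefix_take_left (by omega)).sublist).count_le _
  rcases lt_trichotomy x y with hxy | hxy | hxy
  · exact absurd h (key hxy hx hy).ne
  · exact hxy
  · exact absurd h (key hxy hy hx).ne'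

end List

def heightStep (k : ℕ) (b : Bool) : ℤ := if b then k else -1

def height (k : ℕ) (w : List Bool) : ℤ := k * w.count true - w.count false

@[simp]
theorem height_nil (k : ℕ) : height k [] = 0 := by simp [height]

theorem height_cons (k : ℕ) (b : Bool) (w : List Bool) :
    height k (b :: w) = heightStep k b + height k w := by
  cases b <;> simp [height, heightStep] <;> ring

theorem level_eq_mul_height (k n : ℕ) (w : List Bool) : level k n w = n * height k w := by
  simp only [level, height]; ring

def labelledSteps (k : ℕ) : ℤ → List Bool → List (ℤ × Bool)
  | _, [] => []
  | s, b :: w => labelledSteps k (s + heightStep k b) w ++ [(s, b)]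

theorem map_range_eq_labelledSteps (k : ℕ) (w : List Bool) (s : ℤ) :
    (List.range w.length).reverse.map (fun i => (s + height k (w.take i), w.getD i true)) =
      labelledSteps k s w := by
  induction w generalizing s with
  | nil => rfl
  | cons b w ih =>
    rw [List.length_cons, List.range_succ_eq_map, List.reverse_cons, List.map_append,
      List.map_reverse, List.map_map, labelledSteps, ← ih, ← List.map_reverse]
    simp [Function.comp_def, height_cons, add_assoc]

def lettersBelow (l : List (ℤ × Bool)) (v : ℤ) : List Bool :=
  (l.filter (·.1 < v)).map Prod.snd

def lettersAt (l : List (ℤ × Bool)) (v : ℤ) : List Bool :=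
  (l.filter (·.1 = v)).map Prod.snd

theorem lettersBelow_append_singleton (l : List (ℤ × Bool)) (s v : ℤ) (b : Bool) :
    lettersBelow (l ++ [(s, b)]) v = lettersBelow l v ++ if s < v then [b] else [] := by
  by_cases h : s < v <;> simp [lettersBelow, h]

theorem lettersAt_append_singleton (l : List (ℤ × Bool)) (s v : ℤ) (b : Bool) :
    lettersAt (l ++ [(s, b)]) v = lettersAt l v ++ if s = v then [b] else [] := by
  by_cases h : s = v <;> simp [lettersAt, h]

theorem length_lettersBelow_add_one (l : List (ℤ × Bool)) (v : ℤ) :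
    (lettersBelow l (v + 1)).length = (lettersBelow l v).length + (lettersAt l v).length := by
  induction l with
  | nil => rfl
  | cons a l ih =>
    simp only [lettersBelow, lettersAt, List.filter_cons] at ih ⊢
    split_ifs <;> simp_all <;> omega

section labelledSteps

variable {k : ℕ}

/-- Counting crossings of the line between heights `v - 1` and `v`: east steps starting at `v`
cross it downwards, north steps starting in `[v - k, v)` cross it upwards. -/
theorem count_lettersBelow_crossing (s v : ℤ) (w : List Bool) :
    (lettersBelow (labelledSteps k s w) (v + 1)).count false +
        (lettersBelow (labelledSteps k s w) (v - k)).count true +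
        (if v ≤ s + height k w then 1 else 0) =
      (lettersBelow (labelledSteps k s w) v).length + (if v ≤ s then 1 else 0) := by
  induction w generalizing s with
  | nil => simp [labelledSteps, lettersBelow]
  | cons b w ih =>
    have ih := ih (s + heightStep k b)
    simp only [labelledSteps, lettersBelow_append_singleton, List.count_append,
      List.length_append, height_cons, ← add_assoc] at ih ⊢
    generalize (lettersBelow (labelledSteps k (s + heightStep k b) w) (v + 1)).count false = A at *
    generalize (lettersBelow (labelledSteps k (s + heightStep k b) w) (v - k)).count true = B at *
    generalize (lettersBelow (labelledSteps k (s + heightStep k b) w) v).length = C at *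
    cases b <;> simp only [heightStep, Bool.false_eq_true, ↓reduceIte] at ih ⊢ <;>
      split_ifs at ih ⊢ <;> simp <;> omega

theorem false_mem_lettersAt {s v : ℤ} {w : List Bool} (hend : s + height k w < v)
    (h : v ≤ s ∨ ∃ a ∈ labelledSteps k s w, v ≤ a.1) :
    false ∈ lettersAt (labelledSteps k s w) v := by
  induction w generalizing s with
  | nil => simp [labelledSteps] at h hend; omega
  | cons b w ih =>
    rw [height_cons, ← add_assoc] at hend
    simp only [labelledSteps, List.mem_append, List.mem_singleton] at h
    rw [labelledSteps, lettersAt_append_singleton, List.mem_append]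
    have h' : v ≤ s ∨ ∃ a ∈ labelledSteps k (s + heightStep k b) w, v ≤ a.1 := by
      rcases h with hs | ⟨a, ha | rfl, hva⟩
      exacts [Or.inl hs, Or.inr ⟨a, ha, hva⟩, Or.inl hva]
    rcases h' with hs | hex
    · by_cases hb : s = v ∧ b = false
      · exact Or.inr (by simp [hb])
      · exact Or.inl (ih hend (Or.inl (by cases b <;> simp [heightStep] at hb ⊢ <;> omega)))
    · exact Or.inl (ih hend (Or.inr hex))

theorem head?_lettersAt_ne_some_true {s v : ℤ} {w : List Bool} (hend : s + height k w < v) :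
    (lettersAt (labelledSteps k s w) v).head? ≠ some true := by
  induction w generalizing s with
  | nil => simp [labelledSteps, lettersAt]
  | cons b w ih =>
    rw [height_cons, ← add_assoc] at hend
    rw [labelledSteps, lettersAt_append_singleton]
    rcases hL : lettersAt (labelledSteps k (s + heightStep k b) w) v with _ | ⟨c, cs⟩
    · split_ifs with hs
      · rintro ⟨⟩
        have := false_mem_lettersAt hend (Or.inl (by simp [heightStep]; omega))
        simp [hL] at this
      · simp
    · simpa [hL] using ih hend

theorem eq_of_lettersAt_labelledSteps_eq {s : ℤ} {w w' : List Bool}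
    (h : ∀ v, lettersAt (labelledSteps k s w) v = lettersAt (labelledSteps k s w') v) :
    w = w' := by
  induction w generalizing s w' with
  | nil =>
    cases w' with
    | nil => rfl
    | cons b' w' => simpa [labelledSteps, lettersAt_append_singleton, lettersAt] using h s
  | cons b w ih =>
    cases w' with
    | nil => simpa [labelledSteps, lettersAt_append_singleton, lettersAt] using h s
    | cons b' w' =>
      simp only [labelledSteps, lettersAt_append_singleton] at h
      obtain ⟨-, rfl⟩ : _ ∧ b = b' := by simpa using h s
      exact congrArg _ (ih fun v => List.append_cancel_right (h v))

end labelledSteps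

theorem IsDyck.height_eq_zero {k n : ℕ} {p : List Bool} (hp : IsDyck k n p) : height k p = 0 := by
  simp [height, hp.1, hp.2.1]

theorem IsDyck.nonneg_of_mem_labelledSteps {k n : ℕ} {p : List Bool} (hn : 0 < n)
    (hp : IsDyck k n p) {a : ℤ × Bool} (ha : a ∈ labelledSteps k 0 p) : 0 ≤ a.1 := by
  rw [← map_range_eq_labelledSteps] at ha
  obtain ⟨i, hi, rfl⟩ := List.mem_map.mp ha
  have hlevel := hp.2.2 i (by simp at hi; omega)
  rw [level_eq_mul_height] at hlevel
  simpa using nonneg_of_mul_nonneg_right hlevel (by exact_mod_cast hn)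

theorem sweep_eq_mergeSort (k n : ℕ) (p : List Bool) :
    sweep k n p = ((labelledSteps k 0 p).map (Prod.map ((n : ℤ) * ·) id)).mergeSort
      fun a b => decide (a.1 ≤ b.1) := by
  simp [sweep, ← map_range_eq_labelledSteps, level_eq_mul_height, Function.comp_def]

section sweep

variable {k n : ℕ} {p : List Bool}

theorem sweep_perm :
    (sweep k n p).Perm ((labelledSteps k 0 p).map (Prod.map ((n : ℤ) * ·) id)) := by
  rw [sweep_eq_mergeSort]; exact List.mergeSort_perm _ _

theorem sweep_pairwise : (sweep k n p).Pairwise (fun a b => a.1 ≤ b.1) := by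
  rw [sweep]
  simpa using List.pairwise_mergeSort (le := fun a b : ℤ × Bool => decide (a.1 ≤ b.1))
    (fun a b c hab hbc => by simp_all only [decide_eq_true_eq]; exact hab.trans hbc)
    (fun a b => by simpa using le_total a.1 b.1) _

theorem length_sweepWord : (sweepWord k n p).length = (labelledSteps k 0 p).length := by
  simp [sweepWord, (sweep_perm (k := k) (n := n) (p := p)).length_eq]

theorem filter_map_prodMap_mul (l : List (ℤ × Bool)) (f : ℤ → ℤ → Bool) (v : ℤ)
    (hf : ∀ a, f (n * a) (n * v) = f a v) :
    (l.map (Prod.map ((n : ℤ) * ·) id)).filter (fun a => f a.1 (n * v)) =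
      (l.filter (fun a => f a.1 v)).map (Prod.map ((n : ℤ) * ·) id) := by
  simp [List.filter_map, Function.comp_def, hf]

theorem countP_sweep_lt (hn : 0 < n) (v : ℤ) :
    (sweep k n p).countP (fun a => a.1 < n * v) =
      (lettersBelow (labelledSteps k 0 p) v).length := by
  rw [sweep_perm.countP_eq, List.countP_eq_length_filter,
    filter_map_prodMap_mul _ (fun a b => decide (a < b)) v (by simp [hn]), lettersBelow]
  simp

theorem take_sweepWord_perm (hn : 0 < n) (v : ℤ) :
    ((sweepWord k n p).take (lettersBelow (labelledSteps k 0 p) v).length).Perm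
      (lettersBelow (labelledSteps k 0 p) v) := by
  rw [sweepWord, ← List.map_take, ← countP_sweep_lt hn, sweep_pairwise.take_countP_lt]
  have := (sweep_perm (k := k) (n := n) (p := p)).filter (fun a => decide (a.1 < n * v))
  rw [filter_map_prodMap_mul _ (fun a b => decide (a < b)) v (by simp [hn])] at this
  simpa [lettersBelow, Function.comp_def] using this.map Prod.snd

theorem drop_sweepWord (hn : 0 < n) (v : ℤ) :
    (sweepWord k n p).drop (lettersBelow (labelledSteps k 0 p) v).length =
      lettersAt (labelledSteps k 0 p) v ++
        ((sweep k n p).filter (fun a => n * v < a.1)).map Prod.snd := by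
  rw [sweepWord, ← List.map_drop, ← countP_sweep_lt hn, sweep_pairwise.drop_countP_lt,
    sweep_eq_mergeSort, List.filter_mergeSort_key_eq,
    filter_map_prodMap_mul _ (fun a b => decide (a = b)) v (by simp [hn.ne']),
    List.map_append, List.map_map]
  rfl

end sweep

theorem lettersAt_eq_take_drop_sweepWord {k n : ℕ} {p : List Bool} (hn : 0 < n) (v : ℤ) :
    lettersAt (labelledSteps k 0 p) v =
      ((sweepWord k n p).drop (lettersBelow (labelledSteps k 0 p) v).length).take
        ((lettersBelow (labelledSteps k 0 p) (v + 1)).length -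
          (lettersBelow (labelledSteps k 0 p) v).length) := by
  rw [drop_sweepWord hn, length_lettersBelow_add_one, Nat.add_sub_cancel_left, List.take_left]

/-- `T v` is the position in the word `σ` where the block of steps of height `v` begins. -/
structure IsBlockBoundary (k : ℕ) (σ : List Bool) (T : ℤ → ℕ) : Prop where
  eq_zero : ∀ v ≤ 0, T v = 0
  crossing : ∀ v, (σ.take (T (v + 1))).count false + (σ.take (T (v - k))).count true = T v
  east_or_end : ∀ v, 0 < v → T v = σ.length ∨ σ[T v]? = some false

theorem IsBlockBoundary.unique {k : ℕ} {σ : List Bool} {T T' : ℤ → ℕ}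
    (hT : IsBlockBoundary k σ T) (hT' : IsBlockBoundary k σ T') : T = T' := by
  suffices h : ∀ m : ℕ, ∀ v : ℤ, v ≤ m → T v = T' v from
    funext fun v => h v.toNat v (Int.self_le_toNat v)
  intro m
  induction m with
  | zero =>
    intro v hv
    rw [hT.eq_zero v (by exact_mod_cast hv), hT'.eq_zero v (by exact_mod_cast hv)]
  | succ m ih =>
    intro v hv
    rcases lt_or_eq_of_le hv with hlt | rfl
    · exact ih v (by omega)
    · have hcount : (σ.take (T (m + 1))).count false = (σ.take (T' (m + 1))).count false := by
        have h := hT.crossing m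
        rw [ih m le_rfl, ih (m - k) (by omega), ← hT'.crossing m] at h
        omega
      push_cast
      exact List.eq_of_count_false_take_eq (hT.east_or_end _ (by omega))
        (hT'.east_or_end _ (by omega)) hcount

theorem isBlockBoundary_sweepWord {k n : ℕ} {p : List Bool} (hn : 0 < n) (hp : IsDyck k n p) :
    IsBlockBoundary k (sweepWord k n p) fun v => (lettersBelow (labelledSteps k 0 p) v).length where
  eq_zero v hv := by
    simp only [lettersBelow, List.length_map, List.length_eq_zero_iff, List.filter_eq_nil_iff,
      decide_eq_true_eq, not_lt]
    exact fun a ha => hv.trans (hp.nonneg_of_mem_labelledSteps hn ha)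
  crossing v := by
    have h := count_lettersBelow_crossing (k := k) 0 v p
    rw [hp.height_eq_zero] at h
    rw [(take_sweepWord_perm hn _).count_eq, (take_sweepWord_perm hn _).count_eq]
    simpa using h
  east_or_end v hv := by
    have hend : 0 + height k p < v := by rw [hp.height_eq_zero]; simpa
    have hdrop := drop_sweepWord (k := k) (p := p) hn v
    rcases hL : lettersAt (labelledSteps k 0 p) v with _ | ⟨b, bs⟩
    · left
      have hrest : (sweep k n p).filter (fun a => n * v < a.1) = [] := by
        refine List.filter_eq_nil_iff.mpr fun a ha hva => ?_
        obtain ⟨x, hx, rfl⟩ := List.mem_map.mp (sweep_perm.subset ha)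
        have := false_mem_lettersAt hend (Or.inr ⟨x, hx, by simp [hn] at hva; exact hva.le⟩)
        simp [hL] at this
      rw [hL, hrest, List.nil_append, List.map_nil, List.drop_eq_nil_iff] at hdrop
      have hle : (lettersBelow (labelledSteps k 0 p) v).length ≤ (sweepWord k n p).length := by
        rw [length_sweepWord, lettersBelow, List.length_map]
        exact List.length_filter_le _ _
      omega
    · right
      have hhead := head?_lettersAt_ne_some_true hend
      rw [← List.head?_drop, hdrop, hL]
      rw [hL] at hhead
      cases b <;> simp_all

/-- The sweep map is injective on `(kn,n)`-Dyck paths: two `(kn,n)`-Dyck paths with the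
same sweep-map output word are equal. -/
theorem stmt10 (k n : ℕ) (hn : 0 < n) (p q : List Bool)
    (hp : IsDyck k n p) (hq : IsDyck k n q)
    (h : sweepWord k n p = sweepWord k n q) : p = q := by
  have hT : ∀ v, (lettersBelow (labelledSteps k 0 p) v).length =
      (lettersBelow (labelledSteps k 0 q) v).length :=
    congrFun ((isBlockBoundary_sweepWord hn hp).unique (h ▸ isBlockBoundary_sweepWord hn hq))
  refine eq_of_lettersAt_labelledSteps_eq (k := k) (s := 0) fun v => ?_
  rw [lettersAt_eq_take_drop_sweepWord hn, lettersAt_eq_take_drop_sweepWord hn, h, hT, hT]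
end
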